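/- Let G and H be finite connected simple graphs, g ∈ V(G) and h ∈ V(H). Then ∂_{G ⊠ H}((g,h)) ⊆ (∂_G(g) × V(H)) ∪ (V(G) × ∂_H(h)), where G ⊠ H denotes the strong product of G and H. -/

import Mathlib

/-! Distances in the strong product are the maxima of the coordinate distances. If `(a, b)` lies
in the boundary of `(g, h)` but `a` does not lie in the boundary of `g`, some neighbour `a'` of `a`
is farther from `g` than `a`. For every neighbour `b'` of `b`, the diagonal neighbour `(a', b')` is
no farther from `(g, h)` than `(a, b)`; as its first coordinate moved away from `g`, this forces
`d(h, b') ≤ d(h, b)`. -/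

open SimpleGraph

/-- The boundary of a vertex `x`: vertices `v` all of whose neighbors are
no further from `x` than `v` itself. -/
def boundary {V : Type*} (G : SimpleGraph V) (x : V) : Set V :=
  {v | ∀ w, G.Adj v w → G.dist x w ≤ G.dist x v}

/-- The strong product of simple graphs. -/
def strongProd {V W : Type*} (G : SimpleGraph V) (H : SimpleGraph W) : SimpleGraph (V × W) where
  Adj p q := (G.Adj p.1 q.1 ∧ p.2 = q.2) ∨ (p.1 = q.1 ∧ H.Adj p.2 q.2) ∨
    (G.Adj p.1 q.1 ∧ H.Adj p.2 q.2)
  symm := by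
    constructor
    rintro ⟨a, b⟩ ⟨c, d⟩ (⟨h, rfl⟩ | ⟨rfl, h⟩ | ⟨h1, h2⟩)
    · exact Or.inl ⟨h.symm, rfl⟩
    · exact Or.inr (Or.inl ⟨rfl, h.symm⟩)
    · exact Or.inr (Or.inr ⟨h1.symm, h2.symm⟩)
  loopless := by
    constructor
    rintro ⟨a, b⟩ (⟨h, -⟩ | ⟨-, h⟩ | ⟨h, -⟩) <;> exact h.ne rfl

namespace SimpleGraph

variable {V V' W : Type*}

theorem edist_apply_le_edist_of_adj {G : SimpleGraph V} {G' : SimpleGraph V'} {f : V → V'}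
    (hf : ∀ ⦃u v⦄, G.Adj u v → G'.edist (f u) (f v) ≤ 1) (u v : V) :
    G'.edist (f u) (f v) ≤ G.edist u v := by
  refine le_sInf (Set.forall_mem_range.2 fun p ↦ ?_)
  induction p with
  | nil => simp
  | @cons u w v huw p ih =>
    calc G'.edist (f u) (f v) ≤ G'.edist (f u) (f w) + G'.edist (f w) (f v) := G'.edist_triangle
      _ ≤ 1 + p.length := add_le_add (hf huw) ih
      _ = (p.cons huw).length := by rw [Walk.length_cons, Nat.cast_succ, add_comm]

variable {G : SimpleGraph V} {H : SimpleGraph W}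

theorem boxProd_le_strongProd : G.boxProd H ≤ strongProd G H := by
  rintro x y (⟨hG, hW⟩ | ⟨hH, hV⟩)
  exacts [Or.inl ⟨hG, hW⟩, Or.inr (Or.inl ⟨hV, hH⟩)]

theorem edist_fst_le_one_of_adj_strongProd {x y : V × W} (hxy : (strongProd G H).Adj x y) :
    G.edist x.1 y.1 ≤ 1 := by
  rw [edist_le_one_iff_adj_or_eq]
  rcases hxy with ⟨hG, -⟩ | ⟨hV, -⟩ | ⟨hG, -⟩
  exacts [Or.inl hG, Or.inr hV, Or.inl hG]

theorem edist_snd_le_one_of_adj_strongProd {x y : V × W} (hxy : (strongProd G H).Adj x y) :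
    H.edist x.2 y.2 ≤ 1 := by
  rw [edist_le_one_iff_adj_or_eq]
  rcases hxy with ⟨-, hW⟩ | ⟨-, hH⟩ | ⟨-, hH⟩
  exacts [Or.inr hW, Or.inl hH, Or.inl hH]

theorem Walk.exists_walk_strongProd_length_eq_max {a a' : V} {b b' : W} (p : G.Walk a a')
    (q : H.Walk b b') :
    ∃ r : (strongProd G H).Walk (a, b) (a', b'), r.length = max p.length q.length := by
  induction p generalizing b with
  | nil =>
    exact ⟨(q.boxProdRight G _).mapLe boxProd_le_strongProd,
      (Walk.length_mapLe _ _).trans ((Walk.length_map _ _).trans (zero_max _).symm)⟩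
  | cons hG p ih =>
    cases q with
    | nil =>
      exact ⟨((p.cons hG).boxProdLeft H _).mapLe boxProd_le_strongProd,
        (Walk.length_mapLe _ _).trans ((Walk.length_map _ _).trans (max_zero _).symm)⟩
    | cons hH q =>
      obtain ⟨r, hr⟩ := ih q
      have hadj : (strongProd G H).Adj (_, _) (_, _) := Or.inr (Or.inr ⟨hG, hH⟩)
      refine ⟨r.cons hadj, ?_⟩
      rw [Walk.length_cons, hr, Walk.length_cons, Walk.length_cons, Nat.add_max_add_right]

theorem edist_strongProd (x y : V × W) :
    (strongProd G H).edist x y = max (G.edist x.1 y.1) (H.edist x.2 y.2) := by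
  refine le_antisymm ?_ (max_le (edist_apply_le_edist_of_adj (fun _ _ ↦
    edist_fst_le_one_of_adj_strongProd) x y) (edist_apply_le_edist_of_adj (fun _ _ ↦
    edist_snd_le_one_of_adj_strongProd) x y))
  by_cases hr : G.Reachable x.1 y.1 ∧ H.Reachable x.2 y.2
  · obtain ⟨p, hp⟩ := hr.1.exists_walk_length_eq_edist
    obtain ⟨q, hq⟩ := hr.2.exists_walk_length_eq_edist
    obtain ⟨r, hr⟩ := p.exists_walk_strongProd_length_eq_max q
    calc (strongProd G H).edist x y ≤ r.length := edist_le r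
      _ = max (G.edist x.1 y.1) (H.edist x.2 y.2) := by
        rw [hr, ← hp, ← hq, Nat.mono_cast.map_max]
  · simp only [not_and_or, ← edist_ne_top_iff_reachable, not_not] at hr
    rcases hr with hG | hH
    · simp [hG]
    · simp [hH]

theorem dist_strongProd {x y : V × W} (hG : G.Reachable x.1 y.1) (hH : H.Reachable x.2 y.2) :
    (strongProd G H).dist x y = max (G.dist x.1 y.1) (H.dist x.2 y.2) := by
  have hr : (strongProd G H).Reachable x y := by
    simpa [← edist_ne_top_iff_reachable, edist_strongProd] using And.intro hG hH
  apply Nat.cast_injective (R := ℕ∞)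
  rw [Nat.mono_cast.map_max, hr.coe_dist_eq_edist, hG.coe_dist_eq_edist, hH.coe_dist_eq_edist,
    edist_strongProd]

end SimpleGraph

theorem boundary_strongProd_subset_general {V W : Type*}
    (G : SimpleGraph V) (H : SimpleGraph W) (hG : G.Connected) (hH : H.Connected)
    (g : V) (h : W) :
    boundary (strongProd G H) (g, h) ⊆
      (boundary G g ×ˢ (Set.univ : Set W)) ∪ ((Set.univ : Set V) ×ˢ boundary H h) := by
  rintro ⟨a, b⟩ hab
  by_cases ha : a ∈ boundary G g
  · exact Or.inl ⟨ha, trivial⟩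
  obtain ⟨a', haa', hlt⟩ : ∃ a', G.Adj a a' ∧ G.dist g a < G.dist g a' := by
    simpa [boundary] using ha
  refine Or.inr ⟨trivial, fun b' hbb' ↦ ?_⟩
  have hdiag := hab (a', b') (Or.inr (Or.inr ⟨haa', hbb'⟩))
  rw [dist_strongProd (hG.preconnected _ _) (hH.preconnected _ _),
    dist_strongProd (hG.preconnected _ _) (hH.preconnected _ _)] at hdiag
  by_contra! hb
  exact hdiag.not_gt (max_lt_max hlt hb)

theorem boundary_strongProd_subset {V W : Type*} [Fintype V] [Fintype W]
    (G : SimpleGraph V) (H : SimpleGraph W) (hG : G.Connected) (hH : H.Connected)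
    (g : V) (h : W) :
    boundary (strongProd G H) (g, h) ⊆
      (boundary G g ×ˢ (Set.univ : Set W)) ∪ ((Set.univ : Set V) ×ˢ boundary H h) :=
  boundary_strongProd_subset_general G H hG hH g h
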